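/- The function χ : ℝ → ℝ defined by χ(x) = 2x·(eˣ + 1)/(eˣ − 1) for x ≠ 0 and χ(0) = 4 is convex on all of ℝ. -/

import Mathlib

/-- `χ(x) = 2x·(eˣ + 1)/(eˣ − 1)` for `x ≠ 0`, with `χ(0) = 4` (its limiting value). -/
noncomputable def chi (x : ℝ) : ℝ :=
  if x = 0 then 4 else 2 * x * ((Real.exp x + 1) / (Real.exp x - 1))

/-!
`χ` is even, so it is convex on `ℝ` as soon as it is convex and nondecreasing on `[0, ∞)`:
then `χ x = χ |x|` and `|·|` is convex. On `(0, ∞)` both `χ' ≥ 0` and `χ'' ≥ 0` reduce to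
elementary exponential inequalities, `x ≤ sinh x` and `2 (eˣ - 1) ≤ x (eˣ + 1)` respectively.
Continuity at `0` comes from writing `χ x = 2 (eˣ + 1) / dslope exp 0 x`.
-/

open Real Set

theorem Function.Even.convexOn_univ {f : ℝ → ℝ} (hf : f.Even) (hconv : ConvexOn ℝ (Ici 0) f)
    (hmono : MonotoneOn f (Ici 0)) : ConvexOn ℝ univ f := by
  have habs (x : ℝ) : f |x| = f x := by
    rcases abs_choice x with h | h <;> rw [h]
    exact hf x
  refine ⟨convex_univ, fun x _ y _ a b ha hb hab => ?_⟩
  have htriangle : |a • x + b • y| ≤ a • |x| + b • |y| := by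
    simpa only [smul_eq_mul, abs_mul, abs_of_nonneg ha, abs_of_nonneg hb] using
      abs_add_le (a * x) (b * y)
  rw [← habs (a • x + b • y), ← habs x, ← habs y]
  calc f |a • x + b • y| ≤ f (a • |x| + b • |y|) :=
        hmono (abs_nonneg (a • x + b • y))
          (add_nonneg (mul_nonneg ha (abs_nonneg x)) (mul_nonneg hb (abs_nonneg y))) htriangle
    _ ≤ a • f |x| + b • f |y| := hconv.2 (abs_nonneg x) (abs_nonneg y) ha hb hab

lemma exp_sub_one_ne_zero {x : ℝ} (hx : x ≠ 0) : exp x - 1 ≠ 0 :=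
  sub_ne_zero.2 fun h => hx (exp_eq_one_iff x |>.1 h)

lemma two_mul_exp_sub_one_le_mul_exp_add_one {x : ℝ} (hx : 0 ≤ x) :
    2 * (exp x - 1) ≤ x * (exp x + 1) := by
  have hderiv (y : ℝ) : HasDerivAt (fun z => z * (exp z + 1) - 2 * (exp z - 1))
      ((y - 1) * exp y + 1) y := by
    refine (((hasDerivAt_id' y).fun_mul ((hasDerivAt_exp y).add_const 1)).fun_sub
      (((hasDerivAt_exp y).sub_const 1).const_mul 2)).congr_deriv ?_
    ring
  -- `(1 - y) eʸ ≤ e⁻ʸ eʸ = 1`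
  have hmono := monotone_of_hasDerivAt_nonneg hderiv fun y => by
    have := mul_le_mul_of_nonneg_right (one_sub_le_exp_neg y) (exp_pos y).le
    rw [← exp_add, neg_add_cancel, exp_zero] at this
    show (0 : ℝ) ≤ (y - 1) * exp y + 1
    linarith
  simpa using hmono hx

lemma chi_even : chi.Even := by
  intro x
  rcases eq_or_ne x 0 with rfl | hx
  · simp
  have hne := exp_sub_one_ne_zero hx
  have hne' : 1 - exp x ≠ 0 := fun h => hne (by linarith)
  simp only [chi, neg_eq_zero, if_neg hx, exp_neg]
  field_simp
  ring

lemma chi_eq_div_dslope : chi = fun x => 2 * (exp x + 1) / dslope exp 0 x := by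
  ext x
  rcases eq_or_ne x 0 with rfl | hx
  · norm_num [chi, dslope_same]
  · rw [chi, if_neg hx, dslope_of_ne _ hx, slope_def_field, exp_zero, sub_zero]
    field_simp

lemma dslope_exp_zero_ne_zero (x : ℝ) : dslope exp 0 x ≠ 0 := by
  rcases eq_or_ne x 0 with rfl | hx
  · simp [dslope_same]
  · rw [dslope_of_ne _ hx, slope_def_field, exp_zero, sub_zero]
    exact div_ne_zero (exp_sub_one_ne_zero hx) hx

lemma continuous_chi : Continuous chi := by
  have hdslope : Continuous (dslope exp 0) := continuousOn_univ.1 <|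
    (continuousOn_dslope Filter.univ_mem).2 ⟨continuous_exp.continuousOn, differentiableAt_exp⟩
  rw [chi_eq_div_dslope]
  exact (by fun_prop : Continuous fun x => 2 * (exp x + 1)).div hdslope dslope_exp_zero_ne_zero

noncomputable def chiDeriv (x : ℝ) : ℝ :=
  2 * (exp x + 1) / (exp x - 1) - 4 * x * exp x / (exp x - 1) ^ 2

noncomputable def chiDeriv2 (x : ℝ) : ℝ :=
  4 * exp x * (x * (exp x + 1) - 2 * (exp x - 1)) / (exp x - 1) ^ 3

section Derivatives

variable {x : ℝ}

lemma hasDerivAt_chi (hx : x ≠ 0) : HasDerivAt chi (chiDeriv x) x := by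
  have hne := exp_sub_one_ne_zero hx
  have hformula : HasDerivAt (fun y => 2 * y * ((exp y + 1) / (exp y - 1))) (chiDeriv x) x := by
    refine (((hasDerivAt_id' x).const_mul 2).fun_mul (((hasDerivAt_exp x).add_const 1).fun_div
      ((hasDerivAt_exp x).sub_const 1) hne)).congr_deriv ?_
    rw [chiDeriv]
    field_simp
    ring
  refine hformula.congr_of_eventuallyEq ?_
  filter_upwards [eventually_ne_nhds hx] with y hy
  rw [chi, if_neg hy]

lemma hasDerivAt_chiDeriv (hx : x ≠ 0) : HasDerivAt chiDeriv (chiDeriv2 x) x := by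
  have hne := exp_sub_one_ne_zero hx
  have he := hasDerivAt_exp x
  refine ((((he.add_const 1).const_mul 2).fun_div (he.sub_const 1) hne).fun_sub
    ((((hasDerivAt_id' x).const_mul 4).fun_mul he).fun_div ((he.sub_const 1).fun_pow 2)
      (pow_ne_zero 2 hne))).congr_deriv ?_
  rw [chiDeriv2]
  field_simp
  ring

lemma chiDeriv_nonneg (hx : 0 < x) : 0 ≤ chiDeriv x := by
  have hne := exp_sub_one_ne_zero hx.ne'
  have hsinh : 2 * x * exp x ≤ exp x ^ 2 - 1 := by
    have h := self_le_sinh_iff.2 hx.le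
    rw [sinh_eq, exp_neg] at h
    field_simp at h
    linarith
  have hrepr : chiDeriv x = 2 * (exp x ^ 2 - 1 - 2 * x * exp x) / (exp x - 1) ^ 2 := by
    rw [chiDeriv]
    field_simp
    ring
  rw [hrepr]
  exact div_nonneg (mul_nonneg zero_le_two (by linarith)) (sq_nonneg _)

lemma chiDeriv2_nonneg (hx : 0 < x) : 0 ≤ chiDeriv2 x := by
  have hexp : 0 ≤ exp x - 1 := by linarith [add_one_le_exp x]
  refine div_nonneg (mul_nonneg (by positivity) ?_) (pow_nonneg hexp 3)
  linarith [two_mul_exp_sub_one_le_mul_exp_add_one hx.le]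

end Derivatives

lemma convexOn_chi_Ici : ConvexOn ℝ (Ici 0) chi := by
  refine convexOn_of_hasDerivWithinAt2_nonneg (convex_Ici 0) continuous_chi.continuousOn
    (f' := chiDeriv) (f'' := chiDeriv2) ?_ ?_ ?_ <;> rw [interior_Ici] <;> intro x hx
  · exact (hasDerivAt_chi hx.ne').hasDerivWithinAt
  · exact (hasDerivAt_chiDeriv hx.ne').hasDerivWithinAt
  · exact chiDeriv2_nonneg hx

lemma monotoneOn_chi_Ici : MonotoneOn chi (Ici 0) := by
  refine monotoneOn_of_hasDerivWithinAt_nonneg (convex_Ici 0) continuous_chi.continuousOn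
    (f' := chiDeriv) ?_ ?_ <;> rw [interior_Ici] <;> intro x hx
  · exact (hasDerivAt_chi hx.ne').hasDerivWithinAt
  · exact chiDeriv_nonneg hx

/-- The function `χ` is convex on all of `ℝ`. -/
theorem chi_convexOn : ConvexOn ℝ Set.univ chi :=
  chi_even.convexOn_univ convexOn_chi_Ici monotoneOn_chi_Ici
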